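/- For any complex coefficient matrices A ∈ M_{t×r}(ℂ) and B ∈ M_{t×s}(ℂ), the polynomial Δ_{(D,E,F),(A,B)} is a weight vector for the product of diagonal tori A_n × A_k × A_ℓ of GL_n × GL_k × GL_ℓ, with eigencharacter ψ^{F^t} × ψ^{D^t} × ψ^{E^t}. -/
import Mathlib


open MvPolynomial Matrix Finset

namespace HTW

/-! ## The polynomial ring `P(M_{n,k+ℓ})` and its matrix-entry variables -/

/-- Variable index set for the polynomial ring on `n × K` matrices:
a variable for each matrix entry. -/
abbrev Vars (n K : ℕ) := Fin n × Fin K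

/-- The polynomial ring `P(M_{n,K})` on complex `n × K` matrices. -/
abbrev PolyRing (n K : ℕ) := MvPolynomial (Vars n K) ℂ

/-- The variable `x_{ab}` (0-based), the `(a,b)` entry of the left `n × k` block `X`
of `Z = [X Y]`; junk value `0` out of range. -/
noncomputable def xvar (n k l : ℕ) (a b : ℕ) : PolyRing n (k + l) :=
  if h : a < n ∧ b < k then X (⟨a, h.1⟩, ⟨b, by omega⟩) else 0

/-- The variable `y_{ac}` (0-based), the `(a,c)` entry of the right `n × ℓ` block `Y`
of `Z = [X Y]`; junk value `0` out of range. -/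
noncomputable def yvar (n k l : ℕ) (a c : ℕ) : PolyRing n (k + l) :=
  if h : a < n ∧ c < l then X (⟨a, h.1⟩, ⟨k + c, by omega⟩) else 0

/-- Extension of a partition given on `Fin r` to all of `ℕ` by zero. -/
def ext {r : ℕ} (d : Fin r → ℕ) : ℕ → ℕ := fun i => if h : i < r then d ⟨i, h⟩ else 0

/-! ## The block determinants `Δ_{(D,E,F),(A,B)}` -/

/-- Row index type for the block matrix `Z̃`: superrows of heights `f 0, …, f (t-1)`. -/
abbrev RowIdx {t : ℕ} (f : Fin t → ℕ) := (j : Fin t) × Fin (f j)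

noncomputable def sigmaFinEquiv {t : ℕ} (f : Fin t → ℕ) :
    ((j : Fin t) × Fin (f j)) ≃ Fin (∑ j, f j) :=
  Fintype.equivFinOfCardEq (by simp)

/-- Identification of the column index set (supercolumns of widths
`d 0, …, d (r-1), e 0, …, e (s-1)`) with the row index set, using `|D| + |E| = |F|`. -/
noncomputable def colEquiv {r s t : ℕ} (d : Fin r → ℕ) (e : Fin s → ℕ) (f : Fin t → ℕ)
    (hsum : (∑ i, d i) + (∑ i, e i) = ∑ j, f j) :
    ((i : Fin r) × Fin (d i)) ⊕ ((i : Fin s) × Fin (e i)) ≃ RowIdx f :=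
  (Equiv.sumCongr (sigmaFinEquiv d) (sigmaFinEquiv e)).trans
    (finSumFinEquiv.trans ((finCongr hsum).trans (sigmaFinEquiv f).symm))

/-- The polynomial `Δ_{(D,E,F),(A,B)}` for complex coefficient matrices `A`, `B`:
the determinant of the `|F| × |F|` block matrix `Z̃` with blocks
`α_{jc}·X_{f_j,d_c}` and `β_{jc}·Y_{f_j,e_c}`. -/
noncomputable def Delta (n k l : ℕ) {r s t : ℕ} (d : Fin r → ℕ) (e : Fin s → ℕ)
    (f : Fin t → ℕ) (hsum : (∑ i, d i) + (∑ i, e i) = ∑ j, f j)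
    (A : Fin t → Fin r → ℂ) (B : Fin t → Fin s → ℂ) : PolyRing n (k + l) :=
  Matrix.det (Matrix.of fun i j : RowIdx f =>
    match (colEquiv d e f hsum).symm j with
    | Sum.inl c => MvPolynomial.C (A i.1 c.1) * xvar n k l i.2 c.2
    | Sum.inr c => MvPolynomial.C (B i.1 c.1) * yvar n k l i.2 c.2)

/-- The ring of polynomials in the indeterminates `β_{ih}` with coefficients in
`P(M_{n,k+ℓ})`. -/
abbrev BRing (n k l t s : ℕ) := MvPolynomial (Fin t × Fin s) (PolyRing n (k + l))

/-- The polynomial `Δ_{(D,E,F),(J,B)}` where `J = J_{t,r}` has ones on the diagonal and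
zeros elsewhere and `B` is a matrix of indeterminates `β_{ih}`; an element of the
polynomial ring in the `β_{ih}` over `P(M_{n,k+ℓ})`. -/
noncomputable def DeltaJB (n k l : ℕ) {r s t : ℕ} (d : Fin r → ℕ) (e : Fin s → ℕ)
    (f : Fin t → ℕ) (hsum : (∑ i, d i) + (∑ i, e i) = ∑ j, f j) : BRing n k l t s :=
  Matrix.det (Matrix.of fun i j : RowIdx f =>
    match (colEquiv d e f hsum).symm j with
    | Sum.inl c => if (i.1 : ℕ) = (c.1 : ℕ)
        then (MvPolynomial.C (xvar n k l i.2 c.2) : BRing n k l t s) else 0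
    | Sum.inr c => (X (i.1, c.1) : BRing n k l t s) * MvPolynomial.C (yvar n k l i.2 c.2))

/-- The coefficient `Δ_{(D,E,F),M}` of the monomial `∏ β_{ih}^{m_{ih}}` in the expansion
of `Δ_{(D,E,F),(J,B)}`; a polynomial in the `x_{ab}` and `y_{ac}`. -/
noncomputable def DeltaCoeff (n k l : ℕ) {r s t : ℕ} (d : Fin r → ℕ) (e : Fin s → ℕ)
    (f : Fin t → ℕ) (hsum : (∑ i, d i) + (∑ i, e i) = ∑ j, f j)
    (M : Fin t × Fin s →₀ ℕ) : PolyRing n (k + l) :=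
  MvPolynomial.coeff M (DeltaJB n k l d e f hsum)

/-! ## The tensor product algebra `TA_{n,k,ℓ}` -/

/-- `u` is upper triangular unipotent. -/
def IsUpperUni {m : ℕ} (u : Matrix (Fin m) (Fin m) ℂ) : Prop :=
  (∀ i, u i i = 1) ∧ ∀ i j : Fin m, j < i → u i j = 0

/-- Substitution on `P(M_{n,K})` corresponding to the action of `g ∈ GL_n` by
`(g·p)(Z) = p(g⁻¹·Z) = p(gᵗZ)`, i.e. `Z_{ab} ↦ ∑_c g_{ca} Z_{cb}`. -/
noncomputable def leftSub (n K : ℕ) (g : Matrix (Fin n) (Fin n) ℂ) :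
    PolyRing n K →ₐ[ℂ] PolyRing n K :=
  aeval fun v : Vars n K => ∑ c : Fin n, MvPolynomial.C (g c v.1) * X (c, v.2)

/-- Substitution on `P(M_{n,K})` corresponding to the action of `h ∈ GL_K` by
`(h·p)(Z) = p(h⁻¹·Z) = p(Z h)`, i.e. `Z_{ab} ↦ ∑_c Z_{ac} h_{cb}`. -/
noncomputable def rightSub (n K : ℕ) (g : Matrix (Fin K) (Fin K) ℂ) :
    PolyRing n K →ₐ[ℂ] PolyRing n K :=
  aeval fun v : Vars n K => ∑ c : Fin K, MvPolynomial.C (g c v.2) * X (v.1, c)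

/-- The block diagonal embedding of `GL_k × GL_ℓ` into `GL_{k+ℓ}`. -/
noncomputable def blockDiag (k l : ℕ) (u1 : Matrix (Fin k) (Fin k) ℂ)
    (u2 : Matrix (Fin l) (Fin l) ℂ) : Matrix (Fin (k + l)) (Fin (k + l)) ℂ :=
  (Matrix.fromBlocks u1 0 0 u2).submatrix finSumFinEquiv.symm finSumFinEquiv.symm

/-- The `GL_n` tensor product algebra
`TA_{n,k,ℓ} = P(M_{n,k+ℓ})^{U_k × U_ℓ × U_n}`, as a subspace of `P(M_{n,k+ℓ})`. -/
noncomputable def TA (n k l : ℕ) : Submodule ℂ (PolyRing n (k + l)) where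
  carrier := {p | ∀ (u3 : Matrix (Fin n) (Fin n) ℂ) (u1 : Matrix (Fin k) (Fin k) ℂ)
    (u2 : Matrix (Fin l) (Fin l) ℂ), IsUpperUni u3 → IsUpperUni u1 → IsUpperUni u2 →
    leftSub n (k + l) u3 p = p ∧ rightSub n (k + l) (blockDiag k l u1 u2) p = p}
  add_mem' := by
    intro a b ha hb u3 u1 u2 h3 h1 h2
    refine ⟨?_, ?_⟩
    · rw [map_add, (ha u3 u1 u2 h3 h1 h2).1, (hb u3 u1 u2 h3 h1 h2).1]
    · rw [map_add, (ha u3 u1 u2 h3 h1 h2).2, (hb u3 u1 u2 h3 h1 h2).2]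
  zero_mem' := by
    intro u3 u1 u2 _ _ _
    exact ⟨map_zero _, map_zero _⟩
  smul_mem' := by
    intro c a ha u3 u1 u2 h3 h1 h2
    refine ⟨?_, ?_⟩
    · rw [_root_.map_smul, (ha u3 u1 u2 h3 h1 h2).1]
    · rw [_root_.map_smul, (ha u3 u1 u2 h3 h1 h2).2]

/-- The `i`-th part (0-based `i`) of the transpose of the partition `f`:
`(F^t)_{i+1} = #{j : f_j ≥ i+1}`. -/
def tpart {m : ℕ} (f : Fin m → ℕ) (i : ℕ) : ℕ :=
  (Finset.univ.filter fun j => i < f j).card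

/-! ## Skew diagrams and Littlewood–Richardson tableaux -/

/-- `c'` lies (strictly) northeast of `c`: weakly higher row, weakly further right
column, and not the same cell.  Cells are `(row, column)`, `0`-based, rows increasing
downwards. -/
def NEcell (c' c : ℕ × ℕ) : Prop := c'.1 ≤ c.1 ∧ c.2 ≤ c'.2 ∧ c' ≠ c

instance (c' c : ℕ × ℕ) : Decidable (NEcell c' c) :=
  inferInstanceAs (Decidable (c'.1 ≤ c.1 ∧ c.2 ≤ c'.2 ∧ c' ≠ c))

/-- A finite set of cells `(row, column)` is a skew Young diagram if its columns are
intervals `[dd i, ff i)` for antitone functions `dd ≤ ff`. -/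
def IsSkewDiagram (S : Finset (ℕ × ℕ)) : Prop :=
  ∃ dd ff : ℕ → ℕ, Antitone dd ∧ Antitone ff ∧ (∀ i, dd i ≤ ff i) ∧
    ∀ c : ℕ × ℕ, c ∈ S ↔ dd c.2 ≤ c.1 ∧ c.1 < ff c.2

/-- A Littlewood–Richardson skew tableau: a filling of a skew Young diagram by positive
integers (constant `0` off the diagram) which is semistandard (LR1) and satisfies the
lattice condition (LR2). -/
structure LRTableau where
  /-- the entry in each cell `(row, column)` (`0` off the diagram) -/
  entry : ℕ × ℕ → ℕ
  /-- the underlying set of cells -/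
  supp : Finset (ℕ × ℕ)
  mem_supp : ∀ c, c ∈ supp ↔ entry c ≠ 0
  skew : IsSkewDiagram supp
  /-- (LR1) rows weakly increase from left to right -/
  row_weak : ∀ a i i', i ≤ i' → (a, i) ∈ supp → (a, i') ∈ supp →
    entry (a, i) ≤ entry (a, i')
  /-- (LR1) columns strictly increase from top to bottom -/
  col_strict : ∀ a a' i, a < a' → (a, i) ∈ supp → (a', i) ∈ supp →
    entry (a, i) < entry (a', i)
  /-- (LR2) for `m ≥ 2`, the number of occurrences of `m` in the first `p` rows is at
  most the number of occurrences of `m - 1` in the first `p - 1` rows -/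
  lattice : ∀ m p, 2 ≤ m →
    (supp.filter fun c => c.1 < p ∧ entry c = m).card ≤
      (supp.filter fun c => c.1 + 1 < p ∧ entry c = m - 1).card

/-- The cells of the skew diagram `F^t - D^t`: the `i`-th column consists of the cells
in rows `d_i, …, f_i - 1` (0-based). -/
def shape {r t : ℕ} (d : Fin r → ℕ) (f : Fin t → ℕ) : Finset (ℕ × ℕ) :=
  (Finset.range (∑ j, f j) ×ˢ Finset.range t).filter
    fun c => ext d c.2 ≤ c.1 ∧ c.1 < ext f c.2

/-- `T` is an LR tableau of shape `F^t - D^t` and content `E^t`: the number of entries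
equal to `v` is `(E^t)_v = #{h : e_h ≥ v}`. -/
def IsLRofShape {r s t : ℕ} (T : LRTableau) (d : Fin r → ℕ) (e : Fin s → ℕ)
    (f : Fin t → ℕ) : Prop :=
  T.supp = shape d f ∧
    ∀ v : ℕ, 1 ≤ v →
      (T.supp.filter fun c => T.entry c = v).card =
        (Finset.univ.filter fun h : Fin s => v ≤ e h).card

/-! ## The standard peeling -/

/-- The cells selected by one peeling step: those cells such that no other cell with the
same entry lies northeast of them.  For an LR tableau these are the cells
`C_1(1), …, C_1(ℓ_0)`. -/
def selected (ent : ℕ × ℕ → ℕ) (S : Finset (ℕ × ℕ)) : Finset (ℕ × ℕ) :=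
  S.filter fun c => ∀ c' ∈ S, ent c' = ent c → ¬ NEcell c' c

/-- One step of the standard peeling: remove the selected cells. -/
def peel (ent : ℕ × ℕ → ℕ) (S : Finset (ℕ × ℕ)) : Finset (ℕ × ℕ) := S \ selected ent S

/-- `m_{ih}(T)` (0-based `i`, `h`): the number of cells removed at the `(h+1)`-st step of
the standard peeling of `T` that lie in the `(i+1)`-st column of `F^t`. -/
def peelCount (T : LRTableau) (i h : ℕ) : ℕ :=
  ((selected T.entry ((peel T.entry)^[h] T.supp)).filter fun c => c.2 = i).card

/-- The exponent matrix `M(T) = (m_{ih}(T))` of the monomial `∏ β_{ih}^{m_{ih}}`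
associated to an LR tableau `T`. -/
noncomputable def MT (T : LRTableau) (t s : ℕ) : Fin t × Fin s →₀ ℕ :=
  Finsupp.equivFunOnFinite.symm fun p => peelCount T p.1 p.2

/-! ## The monomials `e(T)` and `ℰ(T)` -/

/-- The monomial `e(T) = ∏_{b ∈ T} y_{a(b), c(b)}` where `a(b)` is the row of the box
`b` and `c(b)` its entry (passing to 0-based indices). -/
noncomputable def eT (n k l : ℕ) (T : LRTableau) : PolyRing n (k + l) :=
  ∏ c ∈ T.supp, yvar n k l c.1 (T.entry c - 1)

/-- The monomial `ℰ(T) = e(T) · ∏_{c=1}^{r} ∏_{j=1}^{d_c} x_{jj}`. -/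
noncomputable def calE (n k l : ℕ) {r : ℕ} (d : Fin r → ℕ) (T : LRTableau) :
    PolyRing n (k + l) :=
  eT n k l T * ∏ c : Fin r, ∏ j ∈ Finset.range (d c), xvar n k l j j

/-! ## The matrix `Ỹ_o` -/

noncomputable def colEquivY {s t : ℕ} (e : Fin s → ℕ) (g : Fin t → ℕ)
    (hE : (∑ h, e h) = ∑ j, g j) : ((h : Fin s) × Fin (e h)) ≃ RowIdx g :=
  (sigmaFinEquiv e).trans ((finCongr hE).trans (sigmaFinEquiv g).symm)

/-- The matrix `Ỹ_o`, with `(j,h)` block `β_{jh}·Y_{(d_j,f_j],e_h}`. -/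
noncomputable def matYo (n k l : ℕ) {r s t : ℕ} (d : Fin r → ℕ) (e : Fin s → ℕ)
    (f : Fin t → ℕ) (hE : (∑ h, e h) = ∑ j, (f j - ext d j)) :
    Matrix (RowIdx fun j => f j - ext d j) (RowIdx fun j => f j - ext d j)
      (BRing n k l t s) :=
  Matrix.of fun i j =>
    (X (i.1, ((colEquivY e _ hE).symm j).1) : BRing n k l t s) *
      MvPolynomial.C (yvar n k l (ext d i.1 + (i.2 : ℕ))
        (((colEquivY e _ hE).symm j).2 : ℕ))

/-- `det Ỹ_o`, a polynomial in the `β_{ih}` with coefficients in `ℂ[y_{ac}]`. -/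
noncomputable def detYo (n k l : ℕ) {r s t : ℕ} (d : Fin r → ℕ) (e : Fin s → ℕ)
    (f : Fin t → ℕ) (hE : (∑ h, e h) = ∑ j, (f j - ext d j)) : BRing n k l t s :=
  Matrix.det (matYo n k l d e f hE)

/-! ## The monomial order on the `y` variables -/

/-- Priority key of a variable: variables with smaller key are larger in the order
`y_{11} > y_{21} > ⋯ > y_{n1} > y_{12} > ⋯`. -/
def varKey {n K : ℕ} (v : Vars n K) : ℕ := (v.2 : ℕ) * n + (v.1 : ℕ)

/-- Graded lexicographic order on monomials (exponent vectors): first compare total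
degrees, then compare lexicographically, larger variables first. -/
def MonLt {n K : ℕ} (m1 m2 : Vars n K →₀ ℕ) : Prop :=
  (m1.sum fun _ x => x) < (m2.sum fun _ x => x) ∨
    ((m1.sum fun _ x => x) = (m2.sum fun _ x => x) ∧
      ∃ v, m1 v < m2 v ∧ ∀ w, varKey w < varKey v → m1 w = m2 w)


/-! ## Further shared definitions -/

/-- The exponent vector of the single variable `y_{ac}` (0-based); zero out of range. -/
noncomputable def yIdx (n k l : ℕ) (a c : ℕ) : Vars n (k + l) →₀ ℕ :=
  if h : a < n ∧ c < l then Finsupp.single (⟨a, h.1⟩, ⟨k + c, by omega⟩) 1 else 0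

/-- The exponent vector of the monomial `e(T)`. -/
noncomputable def eVec (n k l : ℕ) (T : LRTableau) : Vars n (k + l) →₀ ℕ :=
  ∑ c ∈ T.supp, yIdx n k l c.1 (T.entry c - 1)

/-- `i(h)` (0-based): the largest index `i` such that `m_{ih}(T) > 0`, i.e. the
rightmost column of `F^t` receiving a cell at the `(h+1)`-st peeling step. -/
def iNat (T : LRTableau) (t : ℕ) (h : ℕ) : ℕ :=
  Finset.sup ((Finset.range t).filter fun i => 0 < peelCount T i h) id

/-- The `y`-monomial `m` occurs in `p` (a polynomial in the `β_{ih}` over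
`ℂ[x_{ab}, y_{ac}]`) if it occurs in some `β`-coefficient of `p`. -/
def occursY {n k l t s : ℕ} (p : BRing n k l t s) (m : Vars n (k + l) →₀ ℕ) : Prop :=
  ∃ M : Fin t × Fin s →₀ ℕ, m ∈ (MvPolynomial.coeff M p).support

/-- `m` is the leading `y`-monomial of `p` for the order `MonLt`. -/
def IsLeadY {n k l t s : ℕ} (p : BRing n k l t s) (m : Vars n (k + l) →₀ ℕ) : Prop :=
  occursY p m ∧ ∀ m', occursY p m' → m' = m ∨ MonLt m' m

/-! ## Auxiliary lemmas for Statement 3 -/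

noncomputable def lam (m : ℕ) (a : Fin m → ℂ) (i : ℕ) : ℂ :=
  if h : i < m then a ⟨i, h⟩ else 1

lemma leftSub_diag_X (n K : ℕ) (an : Fin n → ℂ) (v : Vars n K) :
    leftSub n K (Matrix.diagonal an) (X v) = C (an v.1) * X v := by
  rw [leftSub, aeval_X]
  rw [Finset.sum_eq_single v.1]
  · rw [Matrix.diagonal_apply_eq]
  · intro b _ hb
    rw [Matrix.diagonal_apply_ne _ hb, map_zero, zero_mul]
  · intro h; exact absurd (Finset.mem_univ _) h

lemma rightSub_diag_X (n K : ℕ) (g : Fin K → ℂ) (v : Vars n K) :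
    rightSub n K (Matrix.diagonal g) (X v) = C (g v.2) * X v := by
  rw [rightSub, aeval_X]
  rw [Finset.sum_eq_single v.2]
  · rw [Matrix.diagonal_apply_eq]
  · intro b _ hb
    rw [Matrix.diagonal_apply_ne _ hb, map_zero, zero_mul]
  · intro h; exact absurd (Finset.mem_univ _) h

lemma leftSub_xvar (n k l : ℕ) (an : Fin n → ℂ) (a b : ℕ) :
    leftSub n (k + l) (Matrix.diagonal an) (xvar n k l a b) =
      C (lam n an a) * xvar n k l a b := by
  unfold xvar
  split_ifs with h
  · rw [leftSub_diag_X]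
    congr 2
    simp [lam, h.1]
  · simp

lemma leftSub_yvar (n k l : ℕ) (an : Fin n → ℂ) (a c : ℕ) :
    leftSub n (k + l) (Matrix.diagonal an) (yvar n k l a c) =
      C (lam n an a) * yvar n k l a c := by
  unfold yvar
  split_ifs with h
  · rw [leftSub_diag_X]
    congr 2
    simp [lam, h.1]
  · simp

lemma blockDiag_diagonal (k l : ℕ) (ak : Fin k → ℂ) (al : Fin l → ℂ) :
    blockDiag k l (Matrix.diagonal ak) (Matrix.diagonal al) =
      Matrix.diagonal (fun b => Sum.elim ak al (finSumFinEquiv.symm b)) := by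
  ext i j
  simp only [blockDiag, Matrix.submatrix_apply, Matrix.fromBlocks_diagonal,
    Matrix.diagonal_apply, EmbeddingLike.apply_eq_iff_eq]

lemma rightSub_xvar (n k l : ℕ) (ak : Fin k → ℂ) (al : Fin l → ℂ) (a b : ℕ) :
    rightSub n (k + l) (blockDiag k l (Matrix.diagonal ak) (Matrix.diagonal al))
        (xvar n k l a b) = C (lam k ak b) * xvar n k l a b := by
  unfold xvar
  split_ifs with h
  · rw [blockDiag_diagonal, rightSub_diag_X]
    congr 2
    show Sum.elim ak al (finSumFinEquiv.symm (Fin.castAdd l ⟨b, h.2⟩)) = _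
    rw [finSumFinEquiv_symm_apply_castAdd]
    simp [lam, h.2]
  · simp

lemma rightSub_yvar (n k l : ℕ) (ak : Fin k → ℂ) (al : Fin l → ℂ) (a c : ℕ) :
    rightSub n (k + l) (blockDiag k l (Matrix.diagonal ak) (Matrix.diagonal al))
        (yvar n k l a c) = C (lam l al c) * yvar n k l a c := by
  unfold yvar
  split_ifs with h
  · rw [blockDiag_diagonal, rightSub_diag_X]
    congr 2
    show Sum.elim ak al (finSumFinEquiv.symm (Fin.natAdd k ⟨c, h.2⟩)) = _
    rw [finSumFinEquiv_symm_apply_natAdd]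
    simp [lam, h.2]
  · simp

lemma prod_lam_eq {m t : ℕ} (a : Fin m → ℂ) (f : Fin t → ℕ) (hf : ∀ j, f j ≤ m) :
    (∏ j : Fin t, ∏ b : Fin (f j), lam m a (b : ℕ)) =
      ∏ i : Fin m, a i ^ tpart f (i : ℕ) := by
  have step : ∀ j : Fin t, (∏ b : Fin (f j), lam m a (b : ℕ)) =
      ∏ i : Fin m, (if (i : ℕ) < f j then a i else 1) := by
    intro j
    have h1 : (∏ i : Fin m, (if (i : ℕ) < f j then a i else 1)) =
        ∏ i ∈ Finset.range m, (if i < f j then lam m a i else 1) := by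
      rw [← Fin.prod_univ_eq_prod_range (fun i => if i < f j then lam m a i else 1) m]
      refine Finset.prod_congr rfl fun i _ => ?_
      simp [lam, i.isLt]
    rw [h1, Fin.prod_univ_eq_prod_range (fun b => lam m a b) (f j)]
    have h2 : (∏ b ∈ Finset.range (f j), (if b < f j then lam m a b else 1)) =
        ∏ b ∈ Finset.range m, (if b < f j then lam m a b else 1) :=
      Finset.prod_subset (Finset.range_subset_range.2 (hf j))
        (fun b _ hb => if_neg (fun hlt => hb (Finset.mem_range.2 hlt)))
    rw [← h2]
    exact Finset.prod_congr rfl fun b hb => (if_pos (Finset.mem_range.1 hb)).symm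
  calc (∏ j : Fin t, ∏ b : Fin (f j), lam m a (b : ℕ))
      = ∏ j : Fin t, ∏ i : Fin m, (if (i : ℕ) < f j then a i else 1) :=
        Finset.prod_congr rfl fun j _ => step j
    _ = ∏ i : Fin m, ∏ j : Fin t, (if (i : ℕ) < f j then a i else 1) :=
        Finset.prod_comm
    _ = ∏ i : Fin m, a i ^ tpart f (i : ℕ) := by
        refine Finset.prod_congr rfl fun i _ => ?_
        rw [Finset.prod_ite, Finset.prod_const, Finset.prod_const_one, mul_one, tpart]

lemma leftSub_C (n K : ℕ) (g : Matrix (Fin n) (Fin n) ℂ) (a : ℂ) :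
    leftSub n K g (C a) = C a := by
  rw [leftSub, aeval_C, MvPolynomial.algebraMap_eq]

lemma rightSub_C (n K : ℕ) (g : Matrix (Fin K) (Fin K) ℂ) (a : ℂ) :
    rightSub n K g (C a) = C a := by
  rw [rightSub, aeval_C, MvPolynomial.algebraMap_eq]

lemma map_delta_row (n k l : ℕ) {r s t : ℕ} (d : Fin r → ℕ) (e : Fin s → ℕ)
    (f : Fin t → ℕ) (hsum : (∑ i, d i) + (∑ i, e i) = ∑ j, f j)
    (A : Fin t → Fin r → ℂ) (B : Fin t → Fin s → ℂ) (an : Fin n → ℂ) :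
    leftSub n (k + l) (Matrix.diagonal an) (Delta n k l d e f hsum A B) =
      C (∏ j, ∏ b : Fin (f j), lam n an (b : ℕ)) * Delta n k l d e f hsum A B := by
  unfold Delta
  rw [AlgHom.map_det]
  have key : (leftSub n (k + l) (Matrix.diagonal an)).mapMatrix
      (Matrix.of fun i j : RowIdx f =>
        match (colEquiv d e f hsum).symm j with
        | Sum.inl c => MvPolynomial.C (A i.1 c.1) * xvar n k l i.2 c.2
        | Sum.inr c => MvPolynomial.C (B i.1 c.1) * yvar n k l i.2 c.2) =
      Matrix.of (fun i j : RowIdx f => C (lam n an ((i.2 : ℕ))) *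
        (Matrix.of fun i j : RowIdx f =>
          match (colEquiv d e f hsum).symm j with
          | Sum.inl c => MvPolynomial.C (A i.1 c.1) * xvar n k l i.2 c.2
          | Sum.inr c => MvPolynomial.C (B i.1 c.1) * yvar n k l i.2 c.2) i j) := by
    refine Matrix.ext fun i j => ?_
    simp only [AlgHom.mapMatrix_apply, Matrix.map_apply, Matrix.of_apply]
    rcases h : (colEquiv d e f hsum).symm j with c | c <;> simp only [h]
    · rw [_root_.map_mul, leftSub_C, leftSub_xvar]; ring
    · rw [_root_.map_mul, leftSub_C, leftSub_yvar]; ring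
  rw [key, Matrix.det_mul_column]
  congr 1
  rw [← map_prod]
  congr 1
  rw [← Finset.univ_sigma_univ, Finset.prod_sigma]

lemma map_delta_col (n k l : ℕ) {r s t : ℕ} (d : Fin r → ℕ) (e : Fin s → ℕ)
    (f : Fin t → ℕ) (hsum : (∑ i, d i) + (∑ i, e i) = ∑ j, f j)
    (A : Fin t → Fin r → ℂ) (B : Fin t → Fin s → ℂ) (ak : Fin k → ℂ) (al : Fin l → ℂ) :
    rightSub n (k + l) (blockDiag k l (Matrix.diagonal ak) (Matrix.diagonal al))
        (Delta n k l d e f hsum A B) =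
      C ((∏ i : Fin r, ∏ b : Fin (d i), lam k ak (b : ℕ)) *
          ∏ i : Fin s, ∏ b : Fin (e i), lam l al (b : ℕ)) * Delta n k l d e f hsum A B := by
  unfold Delta
  rw [AlgHom.map_det]
  set w : RowIdx f → PolyRing n (k + l) := fun j =>
    match (colEquiv d e f hsum).symm j with
    | Sum.inl c => C (lam k ak ((c.2 : ℕ)))
    | Sum.inr c => C (lam l al ((c.2 : ℕ))) with hw
  have key : (rightSub n (k + l)
        (blockDiag k l (Matrix.diagonal ak) (Matrix.diagonal al))).mapMatrix
      (Matrix.of fun i j : RowIdx f =>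
        match (colEquiv d e f hsum).symm j with
        | Sum.inl c => MvPolynomial.C (A i.1 c.1) * xvar n k l i.2 c.2
        | Sum.inr c => MvPolynomial.C (B i.1 c.1) * yvar n k l i.2 c.2) =
      Matrix.of (fun i j : RowIdx f => w j *
        (Matrix.of fun i j : RowIdx f =>
          match (colEquiv d e f hsum).symm j with
          | Sum.inl c => MvPolynomial.C (A i.1 c.1) * xvar n k l i.2 c.2
          | Sum.inr c => MvPolynomial.C (B i.1 c.1) * yvar n k l i.2 c.2) i j) := by
    refine Matrix.ext fun i j => ?_
    simp only [AlgHom.mapMatrix_apply, Matrix.map_apply, Matrix.of_apply, hw]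
    rcases h : (colEquiv d e f hsum).symm j with c | c <;> simp only [h]
    · rw [_root_.map_mul, rightSub_C, rightSub_xvar]; ring
    · rw [_root_.map_mul, rightSub_C, rightSub_yvar]; ring
  rw [key, Matrix.det_mul_row]
  congr 1
  have h1 : ∀ c : (i : Fin r) × Fin (d i),
      w ((colEquiv d e f hsum) (Sum.inl c)) = C (lam k ak ((c.2 : ℕ))) := fun c => by
    simp [hw]
  have h2 : ∀ c : (i : Fin s) × Fin (e i),
      w ((colEquiv d e f hsum) (Sum.inr c)) = C (lam l al ((c.2 : ℕ))) := fun c => by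
    simp [hw]
  rw [← Equiv.prod_comp (colEquiv d e f hsum) w,
    Fintype.prod_sum_type (fun x => w ((colEquiv d e f hsum) x))]
  rw [Finset.prod_congr rfl (fun c _ => h1 c), Finset.prod_congr rfl (fun c _ => h2 c)]
  rw [_root_.map_mul]
  congr 1 <;> rw [← map_prod] <;> congr 1 <;>
    rw [← Finset.univ_sigma_univ, Finset.prod_sigma]

lemma delta_zero_of_bigrow (n k l : ℕ) {r s t : ℕ} (d : Fin r → ℕ) (e : Fin s → ℕ)
    (f : Fin t → ℕ) (hsum : (∑ i, d i) + (∑ i, e i) = ∑ j, f j)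
    (A : Fin t → Fin r → ℂ) (B : Fin t → Fin s → ℂ) (j0 : Fin t) (hj : n < f j0) :
    Delta n k l d e f hsum A B = 0 := by
  unfold Delta
  apply Matrix.det_eq_zero_of_row_eq_zero (⟨j0, ⟨n, hj⟩⟩ : RowIdx f)
  intro j
  rcases h : (colEquiv d e f hsum).symm j with c | c <;>
    simp [h, xvar, yvar]

lemma delta_zero_of_bigd (n k l : ℕ) {r s t : ℕ} (d : Fin r → ℕ) (e : Fin s → ℕ)
    (f : Fin t → ℕ) (hsum : (∑ i, d i) + (∑ i, e i) = ∑ j, f j)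
    (A : Fin t → Fin r → ℂ) (B : Fin t → Fin s → ℂ) (i0 : Fin r) (hi : k < d i0) :
    Delta n k l d e f hsum A B = 0 := by
  unfold Delta
  apply Matrix.det_eq_zero_of_column_eq_zero
    ((colEquiv d e f hsum) (Sum.inl ⟨i0, ⟨k, hi⟩⟩))
  intro i
  simp [Equiv.symm_apply_apply, xvar]

lemma delta_zero_of_bige (n k l : ℕ) {r s t : ℕ} (d : Fin r → ℕ) (e : Fin s → ℕ)
    (f : Fin t → ℕ) (hsum : (∑ i, d i) + (∑ i, e i) = ∑ j, f j)
    (A : Fin t → Fin r → ℂ) (B : Fin t → Fin s → ℂ) (h0 : Fin s) (hh : l < e h0) :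
    Delta n k l d e f hsum A B = 0 := by
  unfold Delta
  apply Matrix.det_eq_zero_of_column_eq_zero
    ((colEquiv d e f hsum) (Sum.inr ⟨h0, ⟨l, hh⟩⟩))
  intro i
  simp [Equiv.symm_apply_apply, yvar]

/-- For any complex coefficient matrices `A`, `B`, the polynomial
`Δ_{(D,E,F),(A,B)}` is a weight vector for the product of diagonal tori
`A_n × A_k × A_ℓ` of `GL_n × GL_k × GL_ℓ`, with eigencharacter
`ψ^{F^t} × ψ^{D^t} × ψ^{E^t}`. -/
theorem delta_weight_vector
    (n k l : ℕ) (hn : 0 < n) (hk : 0 < k) (hl : 0 < l)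
    {r s t : ℕ} (hr : r ≤ k) (hs : s ≤ l) (ht : t ≤ min n (k + l))
    (d : Fin r → ℕ) (e : Fin s → ℕ) (f : Fin t → ℕ)
    (hd : Antitone d) (he : Antitone e) (hf : Antitone f)
    (hdpos : ∀ i, 0 < d i) (hepos : ∀ i, 0 < e i) (hfpos : ∀ j, 0 < f j)
    (hsum : (∑ i, d i) + (∑ i, e i) = ∑ j, f j)
    (A : Fin t → Fin r → ℂ) (B : Fin t → Fin s → ℂ)
    (an : Fin n → ℂ) (ak : Fin k → ℂ) (al : Fin l → ℂ)
    (han : ∀ i, an i ≠ 0) (hak : ∀ i, ak i ≠ 0) (hal : ∀ i, al i ≠ 0) :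
    leftSub n (k + l) (Matrix.diagonal an) (Delta n k l d e f hsum A B) =
      (∏ i : Fin n, an i ^ tpart f (i : ℕ)) • Delta n k l d e f hsum A B ∧
    rightSub n (k + l) (blockDiag k l (Matrix.diagonal ak) (Matrix.diagonal al))
        (Delta n k l d e f hsum A B) =
      ((∏ i : Fin k, ak i ^ tpart d (i : ℕ)) * ∏ i : Fin l, al i ^ tpart e (i : ℕ)) •
        Delta n k l d e f hsum A B := by
  constructor
  · by_cases hgood : ∀ j, f j ≤ n
    · rw [map_delta_row n k l d e f hsum A B an, prod_lam_eq an f hgood,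
        ← MvPolynomial.smul_eq_C_mul]
    · push_neg at hgood
      obtain ⟨j0, hj0⟩ := hgood
      rw [delta_zero_of_bigrow n k l d e f hsum A B j0 hj0, map_zero, smul_zero]
  · by_cases hgd : ∀ i, d i ≤ k
    · by_cases hge : ∀ i, e i ≤ l
      · rw [map_delta_col n k l d e f hsum A B ak al, prod_lam_eq ak d hgd,
          prod_lam_eq al e hge, ← MvPolynomial.smul_eq_C_mul]
      · push_neg at hge
        obtain ⟨h0, hh0⟩ := hge
        rw [delta_zero_of_bige n k l d e f hsum A B h0 hh0, map_zero, smul_zero]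
    · push_neg at hgd
      obtain ⟨i0, hi0⟩ := hgd
      rw [delta_zero_of_bigd n k l d e f hsum A B i0 hi0, map_zero, smul_zero]

end HTW
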